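/- arXiv:2506.19881 — 5 statements merged into one kernel-verified Lean document; each statement's English description precedes it below -/
import Mathlib

section
/- Let q1 and q2 be models and x a prompt with d_TV(q1(·|x), q2(·|x)) < 1. Define the Copy-Protection model p by p(y|x) = min{q1(y|x), q2(y|x)} / Z(x), where Z(x) = ∑_y min{q1(y|x), q2(y|x)}. Then for i = 1, 2: Δ_max(p(·|x) ‖ q_i(·|x)) ≤ −log₂(1 − d_TV(q1(·|x), q2(·|x))). Consequently, p is k_x-NAF on prompt x with respect to any C ⊆ W and any safe function that maps each c ∈ C to q1 or q2, with k_x = −log₂(1 − d_TV(q1(·|x), q2(·|x))). -/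
/-!
With `Z = ∑_y min (q₁ y) (q₂ y)`, the identity `2 min a b = a + b - |a - b|` summed over `y`
gives `Z = 1 - d_TV(q₁, q₂)`, so `Z > 0` exactly when `d_TV < 1`. Since the unnormalised
weights `min (q₁ y) (q₂ y)` lie below both `q₁ y` and `q₂ y`, the normalised model satisfies
`p y ≤ Z⁻¹ q_i y = 2 ^ (-log₂ Z) q_i y`.
-/

open scoped ENNReal

/-- `Δ_max(p‖q) ≤ k` (base-2 max KL divergence): for every outcome `y` in the
support of `p`, `log₂(p y / q y) ≤ k`, i.e. `p y ≤ 2^k * q y`. -/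
def DmaxLe {W : Type*} (p q : PMF W) (k : ℝ) : Prop :=
  ∀ y, p y ≠ 0 → p y ≤ (2 : ℝ≥0∞) ^ k * q y

/-- Total variation distance between two PMFs: `(1/2) ∑_y |p(y) − q(y)|`. -/
noncomputable def dTV {W : Type*} (p q : PMF W) : ℝ :=
  (1 / 2) * ∑' y, |(p y).toReal - (q y).toReal|

namespace PMF

variable {W : Type*}

theorem summable_toReal (p : PMF W) : Summable fun y => (p y).toReal :=
  ENNReal.summable_toReal (p.tsum_coe ▸ ENNReal.one_ne_top)

theorem tsum_toReal (p : PMF W) : ∑' y, (p y).toReal = 1 := by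
  rw [← ENNReal.tsum_toReal_eq p.apply_ne_top, p.tsum_coe, ENNReal.toReal_one]

theorem toReal_tsum_min_eq_one_sub_dTV (p q : PMF W) :
    (∑' y, min (p y) (q y)).toReal = 1 - dTV p q := by
  have h_min : ∀ y, min (p y) (q y) ≠ ∞ := fun y =>
    ne_top_of_le_ne_top (p.apply_ne_top y) (min_le_left _ _)
  have h_abs : Summable fun y => |(p y).toReal - (q y).toReal| :=
    (p.summable_toReal.sub q.summable_toReal).abs
  have h_pointwise : ∀ y, (min (p y) (q y)).toReal =
      ((p y).toReal + (q y).toReal - |(p y).toReal - (q y).toReal|) / 2 := fun y => by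
    rw [ENNReal.toReal_min (p.apply_ne_top y) (q.apply_ne_top y)]
    linarith [min_add_max (p y).toReal (q y).toReal,
      max_sub_min_eq_abs' (p y).toReal (q y).toReal]
  rw [ENNReal.tsum_toReal_eq h_min, tsum_congr h_pointwise, tsum_div_const,
    (p.summable_toReal.add q.summable_toReal).tsum_sub h_abs,
    p.summable_toReal.tsum_add q.summable_toReal, p.tsum_toReal, q.tsum_toReal, dTV]
  ring

end PMF

theorem ENNReal.two_rpow_neg_logb_toReal {z : ℝ≥0∞} (hz : 0 < z.toReal) :
    (2 : ℝ≥0∞) ^ (-Real.logb 2 z.toReal) = z⁻¹ := by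
  have hz_top : z ≠ ∞ := fun h => by simp [h] at hz
  rw [ENNReal.rpow_neg, ← ENNReal.ofReal_ofNat 2, ENNReal.ofReal_rpow_of_pos two_pos,
    Real.rpow_logb two_pos (by norm_num) hz, ENNReal.ofReal_toReal hz_top]

theorem dmaxLe_of_eq_div_tsum {W : Type*} {f : W → ℝ≥0∞} {p q : PMF W}
    (hp : ∀ y, p y = f y / ∑' z, f z) (hf : ∀ y, f y ≤ q y)
    (h_mass : 0 < (∑' z, f z).toReal) :
    DmaxLe p q (-Real.logb 2 (∑' z, f z).toReal) := by
  intro y _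
  rw [hp y, ENNReal.two_rpow_neg_logb_toReal h_mass, div_eq_mul_inv, mul_comm]
  exact mul_le_mul_right (hf y) _

theorem cp_is_naf_general {W X : Type*}
    (q1 q2 : X → PMF W) (x : X)
    (hd : dTV (q1 x) (q2 x) < 1)
    (p : PMF W)
    (hp : ∀ y, p y = min (q1 x y) (q2 x y) / (∑' z, min (q1 x z) (q2 x z))) :
    (DmaxLe p (q1 x) (-Real.logb 2 (1 - dTV (q1 x) (q2 x))) ∧
      DmaxLe p (q2 x) (-Real.logb 2 (1 - dTV (q1 x) (q2 x)))) ∧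
    (∀ (C : Set W) (safe : W → X → PMF W),
      (∀ c ∈ C, safe c x = q1 x ∨ safe c x = q2 x) →
      ∀ c ∈ C, DmaxLe p (safe c x) (-Real.logb 2 (1 - dTV (q1 x) (q2 x)))) := by
  rw [← PMF.toReal_tsum_min_eq_one_sub_dTV]
  have h_mass : 0 < (∑' z, min (q1 x z) (q2 x z)).toReal := by
    rw [PMF.toReal_tsum_min_eq_one_sub_dTV]
    linarith
  have h1 := dmaxLe_of_eq_div_tsum hp (fun _ => min_le_left _ _) h_mass
  have h2 := dmaxLe_of_eq_div_tsum hp (fun _ => min_le_right _ _) h_mass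
  refine ⟨⟨h1, h2⟩, fun C safe h_safe c hc => ?_⟩
  rcases h_safe c hc with h | h <;> rw [h]
  exacts [h1, h2]

/-- if `d_TV(q1(·|x), q2(·|x)) < 1` and `p` is the Copy-Protection
model `p(y|x) = min{q1(y|x), q2(y|x)} / Z(x)` with `Z(x) = ∑_y min{q1(y|x), q2(y|x)}`,
then `Δ_max(p(·|x) ‖ q_i(·|x)) ≤ −log₂(1 − d_TV(q1(·|x), q2(·|x)))` for `i = 1, 2`;
consequently `p` is `k_x`-NAF on `x` w.r.t. any `C` and any `safe` mapping each
`c ∈ C` to `q1` or `q2`, with `k_x = −log₂(1 − d_TV)`. -/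
theorem cp_is_naf {W X : Type*} [Countable W]
    (q1 q2 : X → PMF W) (x : X)
    (hd : dTV (q1 x) (q2 x) < 1)
    (p : PMF W)
    (hp : ∀ y, p y = min (q1 x y) (q2 x y) / (∑' z, min (q1 x z) (q2 x z))) :
    (DmaxLe p (q1 x) (-Real.logb 2 (1 - dTV (q1 x) (q2 x))) ∧
      DmaxLe p (q2 x) (-Real.logb 2 (1 - dTV (q1 x) (q2 x)))) ∧
    (∀ (C : Set W) (safe : W → X → PMF W),
      (∀ c ∈ C, safe c x = q1 x ∨ safe c x = q2 x) →
      ∀ c ∈ C, DmaxLe p (safe c x) (-Real.logb 2 (1 - dTV (q1 x) (q2 x)))) :=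
  cp_is_naf_general q1 q2 x hd p hp
end

section
/- Let D be a finite dataset of works partitioned into disjoint sublists D1 and D2, and let ideas : W → X. For i = 1, 2 define the model q_i by: on prompt x, if D_i^x = {w ∈ D_i : ideas(w) = x} is nonempty, then q_i(·|x) is uniform on D_i^x; otherwise q_i(·|x) = r_i(·|x), where r_i is a model with full support (r_i(y|x) > 0 for every prompt x and every y ∈ W). Define the Copy-Protection model p(y|x) = min{q1(y|x), q2(y|x)} / Z(x) with Z(x) = ∑_y min{q1(y|x), q2(y|x)}. Then for every c ∈ D whose ideas are distinct in D (i.e., no w ∈ D with w ≠ c has ideas(w) = ideas(c)): Z(ideas(c)) > 0, so p(·|ideas(c)) is well-defined, and p(c | ideas(c)) = 1. -/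
open scoped ENNReal

/-!
If the ideas of `c` are distinct in `D`, then the shard containing `c` answers the prompt
`ideas c` with the point mass at `c`, while the other shard has no work with those ideas and
falls back to its full-support model, which gives `c` positive mass. The pointwise minimum is
therefore concentrated on `c`, so after normalisation the Copy-Protection model returns `c`
with probability one.
-/

theorem PMF.uniformOfFinset_singleton {W : Type*} (a : W) (h : ({a} : Finset W).Nonempty) :
    PMF.uniformOfFinset {a} h = PMF.pure a := by
  ext y
  by_cases hy : y = a <;> simp [hy]

theorem PMF.tsum_min_pure_left {W : Type*} (c : W) (v : W → ℝ≥0∞) :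
    ∑' y, min (PMF.pure c y) (v y) = min 1 (v c) := by
  rw [tsum_eq_single c fun y hy => by simp [PMF.pure_apply, hy], PMF.pure_apply_self]

theorem PMF.min_pure_div_tsum_min_eq_one {W : Type*} (c : W) (v : W → ℝ≥0∞) (hv : v c ≠ 0) :
    0 < ∑' y, min (PMF.pure c y) (v y) ∧
      min (PMF.pure c c) (v c) / ∑' y, min (PMF.pure c y) (v y) = 1 := by
  rw [PMF.tsum_min_pure_left, PMF.pure_apply_self]
  have hpos : 0 < min 1 (v c) := lt_min one_pos (pos_iff_ne_zero.mpr hv)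
  exact ⟨hpos, ENNReal.div_self hpos.ne' (ne_top_of_le_ne_top ENNReal.one_ne_top (min_le_left _ _))⟩

section Shard

variable {W X : Type*} [DecidableEq W] [DecidableEq X] (ideas : W → X) {L : List W} {c : W}

theorem toFinset_filter_ideas_eq_singleton (hc : c ∈ L)
    (hdistinct : ∀ w ∈ L, w ≠ c → ideas w ≠ ideas c) :
    (L.filter fun w => decide (ideas w = ideas c)).toFinset = {c} := by
  ext w
  simp only [List.mem_toFinset, List.mem_filter, decide_eq_true_eq, Finset.mem_singleton]
  constructor
  · rintro ⟨hw, hwc⟩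
    by_contra hne
    exact hdistinct w hw hne hwc
  · rintro rfl
    exact ⟨hc, rfl⟩

theorem toFinset_filter_ideas_eq_empty (hc : c ∉ L)
    (hdistinct : ∀ w ∈ L, w ≠ c → ideas w ≠ ideas c) :
    (L.filter fun w => decide (ideas w = ideas c)).toFinset = ∅ := by
  ext w
  simp only [List.mem_toFinset, List.mem_filter, decide_eq_true_eq, Finset.notMem_empty,
    iff_false, not_and]
  intro hw
  exact hdistinct w hw (ne_of_mem_of_not_mem hw hc)

theorem shard_eq_pure_of_mem (q : X → PMF W)
    (hqu : ∀ x (h : ((L.filter fun w => decide (ideas w = x)).toFinset).Nonempty),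
      q x = PMF.uniformOfFinset _ h)
    (hc : c ∈ L) (hdistinct : ∀ w ∈ L, w ≠ c → ideas w ≠ ideas c) :
    q (ideas c) = PMF.pure c := by
  have hF := toFinset_filter_ideas_eq_singleton ideas hc hdistinct
  rw [hqu (ideas c) (hF ▸ Finset.singleton_nonempty c)]
  simp only [hF, PMF.uniformOfFinset_singleton]

theorem shard_apply_ne_zero_of_not_mem (r q : X → PMF W) (hr : ∀ x y, r x y ≠ 0)
    (hqe : ∀ x, (L.filter fun w => decide (ideas w = x)).toFinset = ∅ → q x = r x)
    (hc : c ∉ L) (hdistinct : ∀ w ∈ L, w ≠ c → ideas w ≠ ideas c) :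
    q (ideas c) c ≠ 0 := by
  rw [hqe (ideas c) (toFinset_filter_ideas_eq_empty ideas hc hdistinct)]
  exact hr _ c

end Shard

theorem cp_regurgitates_general {W X : Type*} [DecidableEq W] [DecidableEq X]
    (ideas : W → X)
    (D D1 D2 : List W)
    (hD : D = D1 ++ D2)
    (hdisj : ∀ w ∈ D1, w ∉ D2)
    (r1 r2 : X → PMF W)
    (hr1 : ∀ x y, r1 x y ≠ 0) (hr2 : ∀ x y, r2 x y ≠ 0)
    (q1 q2 : X → PMF W)
    (hq1u : ∀ x (h : ((D1.filter fun w => decide (ideas w = x)).toFinset).Nonempty),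
      q1 x = PMF.uniformOfFinset _ h)
    (hq1e : ∀ x, (D1.filter fun w => decide (ideas w = x)).toFinset = ∅ → q1 x = r1 x)
    (hq2u : ∀ x (h : ((D2.filter fun w => decide (ideas w = x)).toFinset).Nonempty),
      q2 x = PMF.uniformOfFinset _ h)
    (hq2e : ∀ x, (D2.filter fun w => decide (ideas w = x)).toFinset = ∅ → q2 x = r2 x)
    (c : W) (hc : c ∈ D)
    (hdistinct : ∀ w ∈ D, w ≠ c → ideas w ≠ ideas c) :
    0 < (∑' y, min (q1 (ideas c) y) (q2 (ideas c) y)) ∧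
    min (q1 (ideas c) c) (q2 (ideas c) c)
        / (∑' y, min (q1 (ideas c) y) (q2 (ideas c) y)) = 1 := by
  subst hD
  have hdistinct1 : ∀ w ∈ D1, w ≠ c → ideas w ≠ ideas c :=
    fun w hw => hdistinct w (List.mem_append_left _ hw)
  have hdistinct2 : ∀ w ∈ D2, w ≠ c → ideas w ≠ ideas c :=
    fun w hw => hdistinct w (List.mem_append_right _ hw)
  rcases List.mem_append.mp hc with hc1 | hc2
  · rw [shard_eq_pure_of_mem ideas q1 hq1u hc1 hdistinct1]
    exact PMF.min_pure_div_tsum_min_eq_one c _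
      (shard_apply_ne_zero_of_not_mem ideas r2 q2 hr2 hq2e (hdisj c hc1) hdistinct2)
  · simp only [min_comm (q1 (ideas c) _)]
    rw [shard_eq_pure_of_mem ideas q2 hq2u hc2 hdistinct2]
    exact PMF.min_pure_div_tsum_min_eq_one c _
      (shard_apply_ne_zero_of_not_mem ideas r1 q1 hr1 hq1e (fun h => hdisj c h hc2) hdistinct1)

/-- sharded-safe models `q1, q2` built from a partition `D = D1 ++ D2`
(uniform on `D_i^x = {w ∈ D_i : ideas w = x}` when nonempty, otherwise a full-support
model `r_i`), combined by the Copy-Protection rule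
`p(y|x) = min{q1(y|x), q2(y|x)} / Z(x)`.  For any `c ∈ D` whose ideas are distinct in
`D`, the normalizer `Z(ideas c)` is positive (so `p(·|ideas c)` is well-defined) and
`p(c | ideas c) = 1`. -/
theorem cp_regurgitates {W X : Type*} [Countable W] [DecidableEq W] [DecidableEq X]
    (ideas : W → X)
    (D D1 D2 : List W)
    (hD : D = D1 ++ D2)
    (hdisj : ∀ w ∈ D1, w ∉ D2)
    (r1 r2 : X → PMF W)
    (hr1 : ∀ x y, r1 x y ≠ 0) (hr2 : ∀ x y, r2 x y ≠ 0)
    (q1 q2 : X → PMF W)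
    (hq1u : ∀ x (h : ((D1.filter fun w => decide (ideas w = x)).toFinset).Nonempty),
      q1 x = PMF.uniformOfFinset _ h)
    (hq1e : ∀ x, (D1.filter fun w => decide (ideas w = x)).toFinset = ∅ → q1 x = r1 x)
    (hq2u : ∀ x (h : ((D2.filter fun w => decide (ideas w = x)).toFinset).Nonempty),
      q2 x = PMF.uniformOfFinset _ h)
    (hq2e : ∀ x, (D2.filter fun w => decide (ideas w = x)).toFinset = ∅ → q2 x = r2 x)
    (c : W) (hc : c ∈ D)
    (hdistinct : ∀ w ∈ D, w ≠ c → ideas w ≠ ideas c) :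
    0 < (∑' y, min (q1 (ideas c) y) (q2 (ideas c) y)) ∧
    min (q1 (ideas c) c) (q2 (ideas c) c)
        / (∑' y, min (q1 (ideas c) y) (q2 (ideas c) y)) = 1 :=
  cp_regurgitates_general ideas D D1 D2 hD hdisj r1 r2 hr1 hr2 q1 q2 hq1u hq1e hq2u hq2e c hc
    hdistinct
end

section
/- Fix a real 0 < k < 1 and let β = 2^k − 1. For a bitstring D ∈ {0,1}^L, define the model p_{k,D} : ℕ → PMF({0,1}) by: for prompts x with 1 ≤ x ≤ L, p_{k,D}(·|x) = Bernoulli(1/2 + β(D[x] − 1/2)); for all other prompts x, p_{k,D}(·|x) = Bernoulli(1/2). Then for every prompt x, Δ_max(p_{k,D}(·|x) ‖ Bernoulli(1/2)) ≤ log₂(1 + β) = k; that is, p_{k,D} is k-NAF with respect to any C and the safe function coin_1 that always returns the uniform distribution on {0,1}. -/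
open scoped ENNReal

lemma DmaxLe.of_forall_le {W : Type*} {p q : PMF W} {k : ℝ}
    (h : ∀ y, p y ≤ (2 : ℝ≥0∞) ^ k * q y) : DmaxLe p q k :=
  fun y _ => h y

lemma two_rpow_mul_uniformOfFintype_bool (k : ℝ) (b : Bool) :
    (2 : ℝ≥0∞) ^ k * PMF.uniformOfFintype Bool b = ENNReal.ofReal ((2 : ℝ) ^ k / 2) := by
  rw [PMF.uniformOfFintype_apply, Fintype.card_bool, ENNReal.ofReal_div_of_pos two_pos,
    ← ENNReal.ofReal_rpow_of_pos two_pos, ENNReal.ofReal_ofNat, Nat.cast_ofNat, div_eq_mul_inv]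

lemma biased_bit_le_two_rpow_div_two {k : ℝ} (hk : 0 ≤ k) (b c : Bool) :
    (if b = c then (1 + ((2 : ℝ) ^ k - 1)) / 2 else (1 - ((2 : ℝ) ^ k - 1)) / 2)
      ≤ (2 : ℝ) ^ k / 2 := by
  have : (1 : ℝ) ≤ 2 ^ k := Real.one_le_rpow one_le_two hk
  split_ifs <;> linarith

lemma half_le_two_rpow_div_two {k : ℝ} (hk : 0 ≤ k) :
    (1 / 2 : ℝ≥0∞) ≤ ENNReal.ofReal ((2 : ℝ) ^ k / 2) := by
  rw [← ENNReal.ofReal_one, ← ENNReal.ofReal_ofNat 2, ← ENNReal.ofReal_div_of_pos two_pos]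
  exact ENNReal.ofReal_le_ofReal (by linarith [Real.one_le_rpow one_le_two hk])

theorem biased_coin_model_is_naf_general (k : ℝ) (hk0 : 0 < k) (L : ℕ)
    (D : ℕ → Bool)
    (p : ℕ → PMF Bool)
    (hp1 : ∀ x, 1 ≤ x → x ≤ L → ∀ b : Bool,
      p x b = ENNReal.ofReal
        (if b = D x then (1 + ((2 : ℝ) ^ k - 1)) / 2 else (1 - ((2 : ℝ) ^ k - 1)) / 2))
    (hp2 : ∀ x, ¬(1 ≤ x ∧ x ≤ L) → ∀ b : Bool, p x b = 1 / 2) :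
    (∀ x, DmaxLe (p x) (PMF.uniformOfFintype Bool) k) ∧
    Real.logb 2 (1 + ((2 : ℝ) ^ k - 1)) = k := by
  refine ⟨fun x => DmaxLe.of_forall_le fun b => ?_, ?_⟩
  · rw [two_rpow_mul_uniformOfFintype_bool]
    by_cases hx : 1 ≤ x ∧ x ≤ L
    · rw [hp1 x hx.1 hx.2 b]
      exact ENNReal.ofReal_le_ofReal (biased_bit_le_two_rpow_div_two hk0.le b (D x))
    · rw [hp2 x hx b]
      exact half_le_two_rpow_div_two hk0.le
  · rw [add_sub_cancel, Real.logb_rpow two_pos (by norm_num)]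

/-- fix `0 < k < 1` and `β = 2^k − 1`.  The model `p_{k,D}` that on
prompts `1 ≤ x ≤ L` is `Bernoulli(1/2 + β(D[x] − 1/2))` (probability `(1+β)/2` on the
bit `D[x]` and `(1−β)/2` on the other bit) and otherwise `Bernoulli(1/2)` satisfies
`Δ_max(p_{k,D}(·|x) ‖ Bernoulli(1/2)) ≤ log₂(1 + β) = k` for every prompt `x`; i.e.
it is `k`-NAF w.r.t. any `C` and the safe function `coin_1`. -/
theorem biased_coin_model_is_naf (k : ℝ) (hk0 : 0 < k) (hk1 : k < 1) (L : ℕ)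
    (D : ℕ → Bool)
    (p : ℕ → PMF Bool)
    (hp1 : ∀ x, 1 ≤ x → x ≤ L → ∀ b : Bool,
      p x b = ENNReal.ofReal
        (if b = D x then (1 + ((2 : ℝ) ^ k - 1)) / 2 else (1 - ((2 : ℝ) ^ k - 1)) / 2))
    (hp2 : ∀ x, ¬(1 ≤ x ∧ x ≤ L) → ∀ b : Bool, p x b = 1 / 2) :
    (∀ x, DmaxLe (p x) (PMF.uniformOfFintype Bool) k) ∧
    Real.logb 2 (1 + ((2 : ℝ) ^ k - 1)) = k :=
  biased_coin_model_is_naf_general k hk0 L D p hp1 hp2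
end

section
/- Let Train_0 be any training algorithm and ideas : W → X. Define Train_kv as follows: on dataset D, it samples q_0 ← Train_0(D) and returns the model q_kv where, on prompt x, if D_x = {w ∈ D : ideas(w) = x} is nonempty, q_kv(·|x) is uniform on D_x, and otherwise q_kv(·|x) = q_0(·|x). Then Train_kv is tainted with respect to ideas: the user u defined by u(p, aux) = p(·|aux) satisfies, for every dataset D and every w ∈ D, τ(D_{ideas(w)}; ideas(w)) = 1, and hence τ(SubSim(D); ideas(w)) = 1 > 0.99. -/
open scoped ENNReal

/-- The user's output distribution `τ(·; aux)`: sample a model `p ← Train(D)`, then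
sample `z ← u(p, aux)`. -/
noncomputable def tau {W X A : Type*} (Train : List W → PMF (X → PMF W))
    (u : (X → PMF W) → A → PMF W) (D : List W) (aux : A) : PMF W :=
  (Train D).bind fun p => u p aux

/-- The key–value training algorithm `Train_kv`: sample `q0 ← Train0(D)`; the
resulting model, on prompt `x`, is uniform on `D_x = {w ∈ D : ideas w = x}` when that
set is nonempty, and otherwise behaves as `q0(·|x)`. -/
noncomputable def TrainKV {W X : Type*} [DecidableEq W] [DecidableEq X]
    (Train0 : List W → PMF (X → PMF W)) (ideas : W → X) (D : List W) :
    PMF (X → PMF W) :=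
  (Train0 D).map fun q0 x =>
    if h : ((D.filter fun v => decide (ideas v = x)).toFinset).Nonempty then
      PMF.uniformOfFinset _ h
    else q0 x

section TrainKV

variable {W X : Type*} [DecidableEq W] [DecidableEq X]
  (Train0 : List W → PMF (X → PMF W)) (ideas : W → X) (D : List W) (x : X)

theorem apply_eq_uniformOfFinset_of_mem_support_trainKV {p : X → PMF W}
    (hp : p ∈ (TrainKV Train0 ideas D).support)
    (hx : ((D.filter fun v => decide (ideas v = x)).toFinset).Nonempty) :
    p x = PMF.uniformOfFinset _ hx := by
  obtain ⟨q0, -, rfl⟩ := (PMF.mem_support_map_iff _ _ _).1 hp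
  exact dif_pos hx

theorem support_tau_trainKV_subset {w : W} (hw : w ∈ D) (hwx : ideas w = x) :
    (tau (TrainKV Train0 ideas) (fun p aux => p aux) D x).support ⊆
      {v | v ∈ D ∧ ideas v = x} := by
  have hx : ((D.filter fun v => decide (ideas v = x)).toFinset).Nonempty :=
    ⟨w, by simp [hw, hwx]⟩
  intro v hv
  obtain ⟨p, hp, hv : v ∈ (p x).support⟩ := (PMF.mem_support_bind_iff _ _ _).1 hv
  rw [apply_eq_uniformOfFinset_of_mem_support_trainKV Train0 ideas D x hp hx,
    PMF.mem_support_uniformOfFinset_iff] at hv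
  simpa using hv

end TrainKV

theorem trainKV_is_tainted_general {W X : Type*} [DecidableEq W] [DecidableEq X]
    (Train0 : List W → PMF (X → PMF W))
    (ideas : W → X)
    (SubSim : W → Set W) (hrefl : ∀ v, v ∈ SubSim v)
    (D : List W) (w : W) (hw : w ∈ D) :
    (tau (TrainKV Train0 ideas) (fun p aux => p aux) D (ideas w)).toOuterMeasure
        {v | v ∈ D ∧ ideas v = ideas w} = 1 ∧
    (tau (TrainKV Train0 ideas) (fun p aux => p aux) D (ideas w)).toOuterMeasure
        {y | ∃ v ∈ D, y ∈ SubSim v} = 1 ∧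
    (99 / 100 : ℝ≥0∞) <
      (tau (TrainKV Train0 ideas) (fun p aux => p aux) D (ideas w)).toOuterMeasure
        {y | ∃ v ∈ D, y ∈ SubSim v} := by
  set τ := tau (TrainKV Train0 ideas) (fun p aux => p aux) D (ideas w)
  have hτ : τ.support ⊆ {v | v ∈ D ∧ ideas v = ideas w} :=
    support_tau_trainKV_subset Train0 ideas D (ideas w) hw rfl
  have hSubSim : τ.toOuterMeasure {y | ∃ v ∈ D, y ∈ SubSim v} = 1 :=
    (PMF.toOuterMeasure_apply_eq_one_iff _ _).2 fun v hv => ⟨v, (hτ hv).1, hrefl v⟩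
  refine ⟨(PMF.toOuterMeasure_apply_eq_one_iff _ _).2 hτ, hSubSim, ?_⟩
  rw [hSubSim]
  exact ENNReal.div_lt_of_lt_mul (by norm_num)

/-- `Train_kv` is tainted with respect to `ideas`: the user
`u(p, aux) = p(·|aux)` satisfies, for every dataset `D` and every `w ∈ D`,
`τ(D_{ideas w}; ideas w) = 1`, and hence `τ(SubSim(D); ideas w) = 1 > 0.99`. -/
theorem trainKV_is_tainted {W X : Type*} [Countable W] [DecidableEq W] [DecidableEq X]
    (Train0 : List W → PMF (X → PMF W))
    (ideas : W → X)
    (SubSim : W → Set W) (hrefl : ∀ v, v ∈ SubSim v)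
    (D : List W) (w : W) (hw : w ∈ D) :
    (tau (TrainKV Train0 ideas) (fun p aux => p aux) D (ideas w)).toOuterMeasure
        {v | v ∈ D ∧ ideas v = ideas w} = 1 ∧
    (tau (TrainKV Train0 ideas) (fun p aux => p aux) D (ideas w)).toOuterMeasure
        {y | ∃ v ∈ D, y ∈ SubSim v} = 1 ∧
    (99 / 100 : ℝ≥0∞) <
      (tau (TrainKV Train0 ideas) (fun p aux => p aux) D (ideas w)).toOuterMeasure
        {y | ∃ v ∈ D, y ∈ SubSim v} :=
  trainKV_is_tainted_general Train0 ideas SubSim hrefl D w hw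
end

section
/- Suppose there exist works w0, w1 ∈ W such that ideas(w0) = ideas(w1) and SubSim(w0) ∩ SubSim(w1) = ∅. Then for any fixed model q, the constant training algorithm Train_q with Train_q(D) = q (point mass at q for every dataset D) is not tainted with respect to ideas. Concretely, for every user u there exist an i ∈ {0,1}, the dataset D_i = (w_i), and w_i ∈ D_i such that τ(SubSim(D_i); ideas(w_i)) ≤ 1/2 < 0.99. -/
open scoped ENNReal

/-- `Train` is tainted w.r.t. `ideas` (and `SubSim`) if some fixed user copies for
every dataset `D` and every `w ∈ D`: `τ(SubSim(D); ideas w) > 0.99`. -/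
def Tainted {W X A : Type*} (Train : List W → PMF (X → PMF W))
    (ideas : W → A) (SubSim : W → Set W) : Prop :=
  ∃ u : (X → PMF W) → A → PMF W, ∀ D : List W, ∀ w ∈ D,
    (99 / 100 : ℝ≥0∞) <
      (tau Train u D (ideas w)).toOuterMeasure {y | ∃ v ∈ D, y ∈ SubSim v}

/-!
A constant training algorithm sees nothing of the dataset, so the user's output distribution
depends only on the ideas it is given. Since `w₀` and `w₁` have the same ideas, the user must
produce a single distribution that is to land in both `SubSim w₀` and `SubSim w₁`; these are
disjoint, so one of them receives mass at most `1/2`.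
-/

namespace PMF

variable {α : Type*} (p : PMF α) {s t : Set α}

theorem toOuterMeasure_union_of_disjoint (hst : Disjoint s t) :
    p.toOuterMeasure (s ∪ t) = p.toOuterMeasure s + p.toOuterMeasure t := by
  simp only [toOuterMeasure_apply, Set.indicator_union_of_disjoint hst, ENNReal.tsum_add]

theorem toOuterMeasure_apply_le_one : p.toOuterMeasure s ≤ 1 :=
  (p.toOuterMeasure.mono (Set.subset_univ s)).trans
    ((p.toOuterMeasure_apply_eq_one_iff _).2 (Set.subset_univ _)).le

theorem toOuterMeasure_le_half_or_le_half_of_disjoint (hst : Disjoint s t) :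
    p.toOuterMeasure s ≤ 1 / 2 ∨ p.toOuterMeasure t ≤ 1 / 2 := by
  by_contra! h
  have : (1 : ℝ≥0∞) < 1 := calc
    (1 : ℝ≥0∞) = 1 / 2 + 1 / 2 := (ENNReal.add_halves 1).symm
    _ < p.toOuterMeasure s + p.toOuterMeasure t := ENNReal.add_lt_add h.1 h.2
    _ = p.toOuterMeasure (s ∪ t) := (p.toOuterMeasure_union_of_disjoint hst).symm
    _ ≤ 1 := p.toOuterMeasure_apply_le_one
  exact lt_irrefl 1 this

end PMF

theorem tau_const {W X A : Type*} (q : X → PMF W) (u : (X → PMF W) → A → PMF W)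
    (D : List W) (aux : A) : tau (fun _ => PMF.pure q) u D aux = u q aux :=
  PMF.pure_bind _ _

theorem ENNReal.one_half_lt_ninety_nine_hundredths : (1 / 2 : ℝ≥0∞) < 99 / 100 := by
  have : ((1 / 2 : NNReal) : ℝ≥0∞) < ((99 / 100 : NNReal) : ℝ≥0∞) := by norm_cast; norm_num
  simpa using this

theorem constant_model_not_tainted_general {W X A : Type*}
    (ideas : W → A) (SubSim : W → Set W)
    (w : Fin 2 → W)
    (hideas : ideas (w 0) = ideas (w 1))
    (hdisj : SubSim (w 0) ∩ SubSim (w 1) = ∅)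
    (q : X → PMF W) :
    (∀ u : (X → PMF W) → A → PMF W,
      ∃ i : Fin 2,
        (tau (fun _ => PMF.pure q) u [w i] (ideas (w i))).toOuterMeasure
            {y | ∃ v ∈ [w i], y ∈ SubSim v} ≤ 1 / 2) ∧
    ¬ Tainted (fun _ : List W => PMF.pure q) ideas SubSim := by
  have hsingleton (a : W) : {y | ∃ v ∈ [a], y ∈ SubSim v} = SubSim a := by simp
  have key (u : (X → PMF W) → A → PMF W) : ∃ i : Fin 2,
      (tau (fun _ => PMF.pure q) u [w i] (ideas (w i))).toOuterMeasure
          {y | ∃ v ∈ [w i], y ∈ SubSim v} ≤ 1 / 2 := by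
    simp only [tau_const, hsingleton]
    rcases (u q (ideas (w 0))).toOuterMeasure_le_half_or_le_half_of_disjoint
        (Set.disjoint_iff_inter_eq_empty.2 hdisj) with h | h
    · exact ⟨0, h⟩
    · exact ⟨1, hideas ▸ h⟩
  refine ⟨key, fun ⟨u, hu⟩ => ?_⟩
  obtain ⟨i, hi⟩ := key u
  have hlarge := (hu [w i] (w i) (List.mem_singleton_self _)).trans_le hi
  exact hlarge.not_ge ENNReal.one_half_lt_ninety_nine_hundredths.le

/-- if there are works `w₀, w₁` with the same ideas but disjoint
substantial-similarity sets, then for any fixed model `q` the constant training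
algorithm `Train_q(D) = q` is not tainted: for every user `u` there is `i ∈ {0,1}`
such that on the dataset `D_i = (w_i)` (with `w_i ∈ D_i`),
`τ(SubSim(D_i); ideas w_i) ≤ 1/2 < 0.99`. -/
theorem constant_model_not_tainted {W X A : Type*} [Countable W]
    (ideas : W → A) (SubSim : W → Set W) (hrefl : ∀ v, v ∈ SubSim v)
    (w : Fin 2 → W)
    (hideas : ideas (w 0) = ideas (w 1))
    (hdisj : SubSim (w 0) ∩ SubSim (w 1) = ∅)
    (q : X → PMF W) :
    (∀ u : (X → PMF W) → A → PMF W,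
      ∃ i : Fin 2,
        (tau (fun _ => PMF.pure q) u [w i] (ideas (w i))).toOuterMeasure
            {y | ∃ v ∈ [w i], y ∈ SubSim v} ≤ 1 / 2) ∧
    ¬ Tainted (fun _ : List W => PMF.pure q) ideas SubSim :=
  constant_model_not_tainted_general ideas SubSim w hideas hdisj q
end
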